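/- Convex-hull area lower bound: Let S be a finite set of n points of the integer lattice ℤ² in the plane, not all collinear, and let K ⊆ ℝ² be the convex hull (over ℝ) of S. Then the two-dimensional Lebesgue measure of K is at least n/2 − 1. -/

import Mathlib

open MeasureTheory

/-- The embedding of `ℤ × ℤ` into `ℝ × ℝ`. -/
def latticeEmbed (p : ℤ × ℤ) : ℝ × ℝ := ((p.1 : ℝ), (p.2 : ℝ))

/-!
Let `P` be a finite non-collinear set of points in the plane in which every non-degenerate
triangle has area at least `δ`; then `conv P` has area at least `(|P| - 2) δ`. Induct on `|P|`.
Among the two points of `P` extremal for a linear form injective on `P`, one can be removed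
leaving a non-collinear set `P'`. That point `v` is strictly separated from `P'`, so some edge
`ab` of `conv P'` is visible from `v`: a line through `a` and `b` has `P'` on one side and `v`
strictly on the other. Hence `conv P` contains `conv P'` and the triangle `vab`, which overlap in a
null set. For lattice points a non-degenerate triangle has area `|det| / 2 ≥ 1 / 2`.
-/

open Finset
open scoped Pointwise ENNReal

section Collinear

variable {k V P : Type*} [Field k] [AddCommGroup V] [Module k V] [AddTorsor V P] [DecidableEq P]

theorem three_le_card_of_not_collinear {s : Finset P} (hs : ¬Collinear k (s : Set P)) :
    3 ≤ s.card := by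
  by_contra! h
  apply hs
  interval_cases hcard : s.card
  · simp [card_eq_zero.1 hcard, collinear_empty]
  · obtain ⟨x, rfl⟩ := card_eq_one.1 hcard
    simp [collinear_singleton]
  · obtain ⟨x, y, -, rfl⟩ := card_eq_two.1 hcard
    simpa using collinear_pair k x y

theorem collinear_of_collinear_erase {s : Finset P} {v w : P} (hvw : v ≠ w)
    (hs : 4 ≤ s.card) (hv : Collinear k (s.erase v : Set P))
    (hw : Collinear k (s.erase w : Set P)) : Collinear k (s : Set P) := by
  by_cases hvs : v ∈ s
  swap
  · rwa [erase_eq_of_notMem hvs] at hv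
  have hcard : 1 < ((s.erase v).erase w).card := by
    have := (s.erase v).pred_card_le_card_erase (a := w)
    have := s.pred_card_le_card_erase (a := v)
    omega
  obtain ⟨p, hp, q, hq, hpq⟩ := one_lt_card.1 hcard
  have hpv := mem_of_mem_erase hp
  have hqv := mem_of_mem_erase hq
  have hvline : v ∈ line[k, p, q] := hw.mem_affineSpan_of_mem_of_ne
    (mem_erase.2 ⟨ne_of_mem_erase hp, mem_of_mem_erase hpv⟩)
    (mem_erase.2 ⟨ne_of_mem_erase hq, mem_of_mem_erase hqv⟩) (mem_erase.2 ⟨hvw, hvs⟩) hpq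
  have hspan : line[k, p, q] ≤ affineSpan k (s.erase v : Set P) :=
    affineSpan_mono k (Set.pair_subset hpv hqv)
  rw [← insert_erase hvs, coe_insert, collinear_insert_iff_of_mem_affineSpan (hspan hvline)]
  exact hv

end Collinear

theorem not_collinear_of_apply_eq_of_apply_ne {k E : Type*} [Field k] [AddCommGroup E]
    [Module k E] (g : E →ₗ[k] k) {v a b : E} (hab : a ≠ b) (hgab : g a = g b) (hv : g v ≠ g a) :
    ¬Collinear k ({v, a, b} : Set E) := by
  intro h
  obtain ⟨r, hr⟩ := mem_affineSpan_pair_iff_exists_lineMap_eq.1 <|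
    h.mem_affineSpan_of_mem_of_ne (p₃ := v) (by simp) (by simp) (by simp) hab
  apply hv
  rw [← hr, AffineMap.lineMap_apply_module, map_add, map_smul, map_smul, ← hgab, smul_eq_mul,
    smul_eq_mul, ← add_mul, sub_add_cancel, one_mul]

theorem exists_supporting_rotation {ι : Type*} (s : Finset ι) (f g : ι → ℝ) {a : ι}
    (hmax : ∀ x ∈ s, f x ≤ f a) (hpos : ∃ x ∈ s, g a < g x) :
    ∃ b ∈ s, g a < g b ∧ ∃ t : ℝ, 0 ≤ t ∧ f b + t * g b = f a + t * g a ∧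
      ∀ x ∈ s, f x + t * g x ≤ f a + t * g a := by
  classical
  obtain ⟨x₀, hx₀, hgx₀⟩ := hpos
  -- `t` is the least slope at which the level line of `f + t • g` through `a` meets `s` again.
  obtain ⟨b, hb, hbmin⟩ := (s.filter (g a < g ·)).exists_min_image
    (fun x => (f a - f x) / (g x - g a)) ⟨x₀, mem_filter.2 ⟨hx₀, hgx₀⟩⟩
  obtain ⟨hbs, hgb⟩ := mem_filter.1 hb
  have hgb' : 0 < g b - g a := sub_pos.2 hgb
  have ht : 0 ≤ (f a - f b) / (g b - g a) := div_nonneg (sub_nonneg.2 (hmax b hbs)) hgb'.le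
  refine ⟨b, hbs, hgb, _, ht, ?_, fun x hx => ?_⟩
  · have := div_mul_cancel₀ (f a - f b) hgb'.ne'
    linarith
  · by_cases hgx : g a < g x
    · have := (le_div_iff₀ (sub_pos.2 hgx)).1 (hbmin x (mem_filter.2 ⟨hx, hgx⟩))
      linarith
    · have := mul_nonneg ht (sub_nonneg.2 (not_lt.1 hgx))
      linarith [hmax x hx]

section AddHaar

variable {E : Type*} [NormedAddCommGroup E] [NormedSpace ℝ E] [MeasurableSpace E] [BorelSpace E]
  [FiniteDimensional ℝ E] (μ : Measure E) [μ.IsAddHaarMeasure]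

theorem addHaar_setOf_apply_eq {g : E →ₗ[ℝ] ℝ} (hg : g ≠ 0) (c : ℝ) : μ {x | g x = c} = 0 := by
  have hlevel :
      {x | g x = c} = (AffineSubspace.comap g.toAffineMap (affineSpan ℝ {c}) : Set E) := by
    ext x
    simp [AffineSubspace.coe_comap]
  rw [hlevel]
  refine Measure.addHaar_affineSubspace μ _ fun htop => hg (LinearMap.ext fun x => ?_)
  have hmem : ∀ y : E, g y = c := fun y =>
    show y ∈ {x | g x = c} by rw [hlevel, htop]; exact AffineSubspace.mem_top ℝ E y
  have hc : c = 0 := by rw [← hmem 0, map_zero]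
  rw [hmem x, hc, LinearMap.zero_apply]

theorem measure_union_of_subset_halfSpaces {g : E →ₗ[ℝ] ℝ} (hg : g ≠ 0) {c : ℝ} {A B : Set E}
    (hA : A ⊆ {x | g x ≤ c}) (hB : B ⊆ {x | c ≤ g x}) (hBm : NullMeasurableSet B μ) :
    μ (A ∪ B) = μ A + μ B := by
  have hnull : μ (A ∩ B) = 0 := measure_mono_null
    (fun x hx => le_antisymm (hA hx.1) (hB hx.2)) (addHaar_setOf_apply_eq μ hg c)
  rw [← measure_union_add_inter₀ A hBm, hnull, add_zero]

theorem addHaar_convexHull_erase_add_le [DecidableEq E] {P : Finset E} {v a b : E} (hv : v ∈ P)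
    (ha : a ∈ P) (hb : b ∈ P) {g : E →ₗ[ℝ] ℝ} (hgab : g a = g b) (hgv : g a < g v)
    (hgle : ∀ s ∈ P.erase v, g s ≤ g a) :
    μ (convexHull ℝ (P.erase v : Set E)) + μ (convexHull ℝ {v, a, b}) ≤ μ (convexHull ℝ P) := by
  have hg : g ≠ 0 := fun h => hgv.ne (by simp [h])
  have hbelow : convexHull ℝ (P.erase v : Set E) ⊆ {x | g x ≤ g a} :=
    convexHull_min (fun x hx => hgle x hx) (convex_halfSpace_le g.isLinear _)
  have habove : convexHull ℝ {v, a, b} ⊆ {x | g a ≤ g x} :=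
    convexHull_min (Set.insert_subset hgv.le (Set.pair_subset (le_refl (g a)) hgab.le))
      (convex_halfSpace_ge g.isLinear _)
  rw [← measure_union_of_subset_halfSpaces μ hg hbelow habove
    ((convex_convexHull ℝ _).nullMeasurableSet (μ := μ))]
  refine measure_mono (Set.union_subset (convexHull_mono ?_) (convexHull_mono ?_))
  · exact coe_subset.2 (erase_subset v P)
  · simp [Set.insert_subset_iff, hv, ha, hb]

end AddHaar

def wedge (u : ℝ × ℝ) : (ℝ × ℝ) →ₗ[ℝ] ℝ := u.1 • LinearMap.snd ℝ ℝ ℝ - u.2 • LinearMap.fst ℝ ℝ ℝ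

@[simp]
theorem wedge_apply (u x : ℝ × ℝ) : wedge u x = u.1 * x.2 - u.2 * x.1 := rfl

@[simp]
theorem wedge_self (u : ℝ × ℝ) : wedge u u = 0 := by
  rw [wedge_apply, mul_comm, sub_self]

theorem exists_eq_smul_of_wedge_eq_zero {u w : ℝ × ℝ} (hu : u ≠ 0) (h : wedge u w = 0) :
    ∃ r : ℝ, w = r • u := by
  rw [wedge_apply] at h
  by_cases h1 : u.1 = 0
  · have h2 : u.2 ≠ 0 := fun h2 => hu (Prod.ext h1 h2)
    refine ⟨w.2 / u.2, Prod.ext ?_ ?_⟩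
    · simp only [h1, zero_mul, zero_sub, neg_eq_zero, mul_eq_zero, h2, false_or] at h
      simp [h, h1]
    · simp only [Prod.smul_snd, smul_eq_mul]
      field_simp
  · refine ⟨w.1 / u.1, Prod.ext ?_ ?_⟩
    · simp only [Prod.smul_fst, smul_eq_mul]
      field_simp
    · simp only [Prod.smul_snd, smul_eq_mul]
      field_simp
      linarith

theorem collinear_of_wedge_sub_eq_zero {u a : ℝ × ℝ} (hu : u ≠ 0) {s : Set (ℝ × ℝ)}
    (hs : ∀ x ∈ s, wedge u (x - a) = 0) : Collinear ℝ s := by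
  rw [collinear_iff_exists_forall_eq_smul_vadd]
  refine ⟨a, u, fun x hx => ?_⟩
  obtain ⟨r, hr⟩ := exists_eq_smul_of_wedge_eq_zero hu (hs x hx)
  exact ⟨r, by rw [vadd_eq_add, ← hr, sub_add_cancel]⟩

theorem wedge_sub_ne_zero_of_not_collinear {a b c : ℝ × ℝ}
    (h : ¬Collinear ℝ ({a, b, c} : Set (ℝ × ℝ))) : wedge (b - a) (c - a) ≠ 0 := by
  intro h0
  apply h
  refine collinear_of_wedge_sub_eq_zero (a := a) (sub_ne_zero.2 (ne₁₂_of_not_collinear h).symm) ?_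
  rintro x (rfl | rfl | rfl) <;> simp only [sub_self, map_zero, wedge_self, h0]

theorem exists_linearMap_injOn (P : Finset (ℝ × ℝ)) :
    ∃ φ : (ℝ × ℝ) →ₗ[ℝ] ℝ, Set.InjOn φ P := by
  -- `x + t * y` identifies two distinct points of `P` for at most one slope `t` per pair.
  obtain ⟨t, ht⟩ := Infinite.exists_notMem_finset
    ((P ×ˢ P).image fun pq => (pq.2.1 - pq.1.1) / (pq.1.2 - pq.2.2))
  refine ⟨LinearMap.fst ℝ ℝ ℝ + t • LinearMap.snd ℝ ℝ ℝ, fun p hp q hq hpq => ?_⟩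
  simp only [LinearMap.add_apply, LinearMap.fst_apply, LinearMap.smul_apply, LinearMap.snd_apply,
    smul_eq_mul] at hpq
  by_cases h2 : p.2 = q.2
  · exact Prod.ext (by rw [h2] at hpq; linarith) h2
  · refine absurd (mem_image.2 ⟨(p, q), mem_product.2 ⟨hp, hq⟩, ?_⟩) ht
    field_simp [sub_ne_zero.2 h2]
    linarith

theorem exists_exposed_not_collinear_erase {P : Finset (ℝ × ℝ)}
    (hP : ¬Collinear ℝ (P : Set (ℝ × ℝ))) (h4 : 4 ≤ P.card) :
    ∃ v ∈ P, ∃ φ : (ℝ × ℝ) →ₗ[ℝ] ℝ, (∀ s ∈ P.erase v, φ s < φ v) ∧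
      ¬Collinear ℝ (P.erase v : Set (ℝ × ℝ)) := by
  obtain ⟨φ, hφ⟩ := exists_linearMap_injOn P
  have hne : P.Nonempty := card_pos.1 (by omega)
  obtain ⟨v, hv, hvmax⟩ := P.exists_max_image φ hne
  obtain ⟨w, hw, hwmin⟩ := P.exists_min_image φ hne
  have hlt_v : ∀ s ∈ P.erase v, φ s < φ v := fun s hs =>
    (hvmax s (mem_of_mem_erase hs)).lt_of_ne
      fun h => ne_of_mem_erase hs (hφ (mem_of_mem_erase hs) hv h)
  have hlt_w : ∀ s ∈ P.erase w, (-φ) s < (-φ) w := fun s hs => neg_lt_neg <|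
    (hwmin s (mem_of_mem_erase hs)).lt_of_ne'
      fun h => ne_of_mem_erase hs (hφ (mem_of_mem_erase hs) hw h)
  have hvw : v ≠ w := by
    rintro rfl
    obtain ⟨s, hs⟩ := (P.erase v).card_pos.1 (by rw [card_erase_of_mem hv]; omega)
    exact (hlt_v s hs).not_ge (hwmin s (mem_of_mem_erase hs))
  by_contra! h
  exact hP (collinear_of_collinear_erase hvw h4 (h v hv φ hlt_v) (h w hw (-φ) hlt_w))

theorem exists_visible_edge {S : Finset (ℝ × ℝ)} (hS : S.Nonempty) {v : ℝ × ℝ}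
    {φ : (ℝ × ℝ) →ₗ[ℝ] ℝ} (hφ : ∀ s ∈ S, φ s < φ v)
    (hcol : ¬Collinear ℝ (insert v (S : Set (ℝ × ℝ)))) :
    ∃ a ∈ S, ∃ b ∈ S, a ≠ b ∧ ∃ g : (ℝ × ℝ) →ₗ[ℝ] ℝ,
      g a = g b ∧ g a < g v ∧ ∀ s ∈ S, g s ≤ g a := by
  obtain ⟨a, ha, hamax⟩ := S.exists_max_image φ hS
  have hu : v - a ≠ 0 := sub_ne_zero.2 fun h => (hφ a ha).ne (h ▸ rfl)
  obtain ⟨ψ, hψv, hψpos⟩ : ∃ ψ : (ℝ × ℝ) →ₗ[ℝ] ℝ, ψ v = ψ a ∧ ∃ s ∈ S, ψ a < ψ s := by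
    have hv : wedge (v - a) v = wedge (v - a) a := by
      rw [← sub_eq_zero, ← map_sub, wedge_self]
    obtain ⟨s, hs, hne⟩ : ∃ s ∈ S, wedge (v - a) s ≠ wedge (v - a) a := by
      by_contra! h
      refine hcol (collinear_of_wedge_sub_eq_zero hu (a := a) ?_)
      rintro x (rfl | hx) <;> rw [map_sub, sub_eq_zero]
      exacts [hv, h x hx]
    rcases hne.lt_or_gt with hlt | hlt
    · exact ⟨-wedge (v - a), by simp only [LinearMap.neg_apply, hv], s, hs, neg_lt_neg hlt⟩
    · exact ⟨wedge (v - a), hv, s, hs, hlt⟩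
  obtain ⟨b, hb, hab, t, -, hbt, hle⟩ := exists_supporting_rotation S φ ψ hamax hψpos
  refine ⟨a, ha, b, hb, fun h => hab.ne (congrArg ψ h), φ + t • ψ, ?_, ?_, ?_⟩
  · simpa using hbt.symm
  · simpa [hψv] using hφ a ha
  · simpa using hle

theorem card_sub_two_mul_le_addHaar_convexHull (μ : Measure (ℝ × ℝ)) [μ.IsAddHaarMeasure]
    {δ : ℝ≥0∞} (P : Finset (ℝ × ℝ))
    (hδ : ∀ a ∈ P, ∀ b ∈ P, ∀ c ∈ P, ¬Collinear ℝ ({a, b, c} : Set (ℝ × ℝ)) →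
      δ ≤ μ (convexHull ℝ {a, b, c}))
    (hP : ¬Collinear ℝ (P : Set (ℝ × ℝ))) :
    ((P.card - 2 : ℕ) : ℝ≥0∞) * δ ≤ μ (convexHull ℝ P) := by
  induction P using Finset.strongInduction with
  | H P ih =>
    rcases (three_le_card_of_not_collinear hP).eq_or_lt with h3 | h4
    · obtain ⟨a, b, c, -, -, -, rfl⟩ := card_eq_three.1 h3.symm
      simpa [← h3] using hδ a (by simp) b (by simp) c (by simp) (by simpa using hP)
    obtain ⟨v, hv, φ, hφ, hcol⟩ := exists_exposed_not_collinear_erase hP h4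
    have hinsert : insert v (P.erase v : Set (ℝ × ℝ)) = P := by
      rw [← coe_insert, insert_erase hv]
    obtain ⟨a, ha, b, hb, hab, g, hgab, hgv, hgle⟩ := exists_visible_edge
      (card_pos.1 (by rw [card_erase_of_mem hv]; omega)) hφ (hinsert ▸ hP)
    have ha' := mem_of_mem_erase ha
    have hb' := mem_of_mem_erase hb
    have hcard : P.card - 2 = ((P.erase v).card - 2) + 1 := by
      rw [card_erase_of_mem hv]; omega
    calc ((P.card - 2 : ℕ) : ℝ≥0∞) * δ = ((P.erase v).card - 2 : ℕ) * δ + δ := by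
          rw [hcard, Nat.cast_add, Nat.cast_one, add_one_mul]
      _ ≤ μ (convexHull ℝ (P.erase v : Set (ℝ × ℝ))) + μ (convexHull ℝ {v, a, b}) := by
          gcongr
          · exact ih _ (erase_ssubset hv) (fun x hx y hy z hz => hδ x (mem_of_mem_erase hx)
              y (mem_of_mem_erase hy) z (mem_of_mem_erase hz)) hcol
          · exact hδ v hv a ha' b hb' (not_collinear_of_apply_eq_of_apply_ne g hab hgab hgv.ne')
      _ ≤ μ (convexHull ℝ P) := addHaar_convexHull_erase_add_le μ hv ha' hb' hgab hgv hgle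

theorem half_le_volume_stdTriangle :
    1 / 2 ≤ volume (convexHull ℝ {0, (1, 0), (0, 1)} : Set (ℝ × ℝ)) := by
  set R := regionBetween (fun _ => 0) (fun x => 1 - x) (Set.Ioc (0 : ℝ) 1)
  have hsub : R ⊆ convexHull ℝ {0, (1, 0), (0, 1)} := by
    rintro ⟨x, y⟩ ⟨⟨hx, -⟩, hy, hxy⟩
    have := (convex_convexHull ℝ ({0, (1, 0), (0, 1)} : Set (ℝ × ℝ))).sum_mem
      (t := univ) (w := ![1 - x - y, x, y]) (z := ![0, (1, 0), (0, 1)])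
      (fun i _ => by fin_cases i <;> simp <;> linarith) (by simp [Fin.sum_univ_three]; ring)
      (fun i _ => subset_convexHull ℝ _ (by fin_cases i <;> simp))
    simpa [Fin.sum_univ_three] using this
  have hint : ∫ x in (0 : ℝ)..1, (1 - x) = 1 / 2 := by
    rw [intervalIntegral.integral_sub intervalIntegrable_const
      intervalIntegral.intervalIntegrable_id]
    norm_num [integral_id]
  calc (1 / 2 : ℝ≥0∞) = volume R := by
        rw [Measure.volume_eq_prod, volume_regionBetween_eq_integral (g := fun x => 1 - x)
          integrableOn_zero (continuous_const.sub continuous_id).integrableOn_Ioc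
          measurableSet_Ioc fun x hx => sub_nonneg.2 hx.2,
          ← intervalIntegral.integral_of_le zero_le_one]
        simp [hint]
    _ ≤ _ := measure_mono hsub

theorem addHaar_convexHull_triangle (μ : Measure (ℝ × ℝ)) [μ.IsAddHaarMeasure] (a b c : ℝ × ℝ) :
    μ (convexHull ℝ {a, b, c}) =
      ENNReal.ofReal |wedge (b - a) (c - a)| * μ (convexHull ℝ {0, (1, 0), (0, 1)}) := by
  set L := Matrix.toLin (Module.Basis.finTwoProd ℝ) (Module.Basis.finTwoProd ℝ)
    !![(b - a).1, (c - a).1; (b - a).2, (c - a).2]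
  have himage : convexHull ℝ {a, b, c} = a +ᵥ L '' convexHull ℝ {0, (1, 0), (0, 1)} := by
    rw [LinearMap.image_convexHull, ← convexHull_vadd]
    have hL₁ : L (1, 0) = b - a := by simp [L, Prod.ext_iff]
    have hL₂ : L (0, 1) = c - a := by simp [L, Prod.ext_iff]
    simp [Set.image_insert_eq, Set.vadd_set_insert, hL₁, hL₂]
  rw [himage, measure_vadd, Measure.addHaar_image_linearMap, LinearMap.det_toLin,
    Matrix.det_fin_two_of, wedge_apply, mul_comm (b - a).2]

theorem half_le_volume_convexHull_latticeEmbed {a b c : ℤ × ℤ}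
    (h : ¬Collinear ℝ ({latticeEmbed a, latticeEmbed b, latticeEmbed c} : Set (ℝ × ℝ))) :
    1 / 2 ≤ volume (convexHull ℝ {latticeEmbed a, latticeEmbed b, latticeEmbed c}) := by
  have hwedge : wedge (latticeEmbed b - latticeEmbed a) (latticeEmbed c - latticeEmbed a) =
      ((b.1 - a.1) * (c.2 - a.2) - (b.2 - a.2) * (c.1 - a.1) : ℤ) := by
    simp [latticeEmbed]
  have hone : 1 ≤ |wedge (latticeEmbed b - latticeEmbed a) (latticeEmbed c - latticeEmbed a)| := by
    have hne := wedge_sub_ne_zero_of_not_collinear h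
    rw [hwedge, ← Int.cast_abs] at *
    exact_mod_cast Int.one_le_abs (by exact_mod_cast hne)
  rw [addHaar_convexHull_triangle]
  calc (1 / 2 : ℝ≥0∞) = ENNReal.ofReal 1 * (1 / 2) := by simp
    _ ≤ _ := by gcongr; exact half_le_volume_stdTriangle

theorem latticeEmbed_injective : Function.Injective latticeEmbed := by
  rintro ⟨a₁, a₂⟩ ⟨b₁, b₂⟩ h
  simpa [latticeEmbed] using h

/-- **Convex-hull area lower bound:** the convex hull of `n` non-collinear lattice
points has area at least `n/2 - 1`. -/
theorem convexHull_area_lower_bound (S : Finset (ℤ × ℤ)) (n : ℕ) (hn : S.card = n)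
    (hncol : ¬ Collinear ℝ (↑(S.image latticeEmbed) : Set (ℝ × ℝ)))
    (K : Set (ℝ × ℝ)) (hK : K = convexHull ℝ (↑(S.image latticeEmbed) : Set (ℝ × ℝ))) :
    (n : ℝ) / 2 - 1 ≤ (volume K).toReal := by
  have hbound := card_sub_two_mul_le_addHaar_convexHull volume (δ := 1 / 2) (S.image latticeEmbed)
    (by simp only [mem_image]
        rintro _ ⟨a, -, rfl⟩ _ ⟨b, -, rfl⟩ _ ⟨c, -, rfl⟩
        exact half_le_volume_convexHull_latticeEmbed) hncol
  rw [card_image_of_injective S latticeEmbed_injective, hn, ← hK] at hbound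
  have hfin : volume K ≠ ⊤ := by
    rw [hK]
    exact ((S.image latticeEmbed).finite_toSet.isCompact_convexHull (𝕜 := ℝ)).measure_lt_top.ne
  have hreal := ENNReal.toReal_mono hfin hbound
  rw [ENNReal.toReal_mul, ENNReal.toReal_natCast] at hreal
  norm_num at hreal
  have hcast : (n : ℝ) ≤ ((n - 2 : ℕ) : ℝ) + 2 := by exact_mod_cast le_tsub_add
  linarith
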